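/- arXiv:2308.08240 — 2 statements merged into one kernel-verified Lean document; each statement's English description precedes it below -/
import Mathlib

section
/- Let G be a graph on vertices u₁,…,u_n, let H₁,…,H_n be pairwise disjoint graphs with at least one H_i not complete, and let M be the maximum over all cliques {u_{i₁},…,u_{i_k}} of G with every H_{i_j} not complete, of box(H_{i₁}) + … + box(H_{i_k}). Then M ≤ box(G[H₁,…,H_n]) ≤ box(H₁) + … + box(H_n). -/
open SimpleGraph Finset

/-- A representation of `G` as intersection graph of boxes in `ℝ^ℓ`
(products of `ℓ` closed bounded intervals). -/
def BoxRep {V : Type*} (G : SimpleGraph V) (ℓ : ℕ) : Prop :=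
  ∃ f : V → Fin ℓ → ℝ × ℝ,
    (∀ v i, (f v i).1 ≤ (f v i).2) ∧
    ∀ u v : V, u ≠ v →
      (G.Adj u v ↔ ∀ i, max (f u i).1 (f v i).1 ≤ min (f u i).2 (f v i).2)

/-- The boxicity of a graph: the least positive `ℓ` admitting a box representation. -/
noncomputable def boxicity {V : Type*} (G : SimpleGraph V) : ℕ :=
  sInf {ℓ : ℕ | 0 < ℓ ∧ BoxRep G ℓ}

/-- A graph is an interval graph iff it has a box representation in dimension 1. -/
def IsIntervalGraph {V : Type*} (G : SimpleGraph V) : Prop := BoxRep G 1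

/-- A graph is not complete. -/
def NotComplete {V : Type*} (G : SimpleGraph V) : Prop := ∃ a b : V, a ≠ b ∧ ¬ G.Adj a b

/-- The circular clique `G_k^d`: vertices `a_0, …, a_{k-1}`, with `a_i ~ a_j`
iff `d ≤ |i - j| ≤ k - d`. -/
def circularClique (k d : ℕ) : SimpleGraph (Fin k) :=
  SimpleGraph.fromRel (fun i j =>
    d ≤ ((i : ℤ) - (j : ℤ)).natAbs ∧ ((i : ℤ) - (j : ℤ)).natAbs ≤ k - d)

/-- The `G`-generalized join `G[H₁, …, Hₙ]`. -/
def genJoin {n : ℕ} {V : Fin n → Type*} (G : SimpleGraph (Fin n))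
    (H : ∀ i, SimpleGraph (V i)) : SimpleGraph (Σ i, V i) :=
  SimpleGraph.fromRel (fun x y =>
    G.Adj x.1 y.1 ∨ ∃ h : x.1 = y.1, (H y.1).Adj (h ▸ x.2) y.2)

/-- The join `G ∨ H` of two disjoint graphs. -/
def graphJoin {α β : Type*} (G : SimpleGraph α) (H : SimpleGraph β) :
    SimpleGraph (α ⊕ β) :=
  SimpleGraph.fromRel (fun x y =>
    match x, y with
    | .inl a, .inl b => G.Adj a b
    | .inr a, .inr b => H.Adj a b
    | _, _ => True)

/-- The equivalence `x ∼ y ↔ N(x) = N(y)` (equal open neighborhoods). -/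
def nbhdSetoid {V : Type*} (G : SimpleGraph V) : Setoid V :=
  ⟨fun x y => G.neighborSet x = G.neighborSet y,
    ⟨fun _ => rfl, Eq.symm, Eq.trans⟩⟩

/-- The reduced graph of `G`: vertices are the classes of `nbhdSetoid G`,
with `[x] ~ [y]` iff `x ~ y` in `G`. -/
def reducedGraph {V : Type*} (G : SimpleGraph V) :
    SimpleGraph (Quotient (nbhdSetoid G)) :=
  SimpleGraph.fromRel (fun a b =>
    ∃ x y : V, Quotient.mk (nbhdSetoid G) x = a ∧ Quotient.mk (nbhdSetoid G) y = b ∧ G.Adj x y)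

/-- The zero-divisor graph of a commutative ring: vertices are the nonzero
zero-divisors, with `x ~ y` iff `x * y = 0`. -/
def zeroDivisorGraph (R : Type*) [CommRing R] :
    SimpleGraph {x : R // x ≠ 0 ∧ ∃ y : R, y ≠ 0 ∧ x * y = 0} :=
  SimpleGraph.fromRel (fun x y => (x : R) * (y : R) = 0)

/-- Equivalence on a ring: equal annihilators. -/
def annSetoid (R : Type*) [CommRing R] : Setoid R :=
  ⟨fun x y => ∀ r : R, x * r = 0 ↔ y * r = 0,
    ⟨fun _ _ => Iff.rfl, fun h r => (h r).symm, fun h h' r => (h r).trans (h' r)⟩⟩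

/-- Vertices of the compressed zero-divisor graph: annihilator classes
other than the class of `0` and the class of `1`. -/
def CompressedVertex (R : Type*) [CommRing R] : Type _ :=
  {c : Quotient (annSetoid R) //
    c ≠ Quotient.mk (annSetoid R) 0 ∧ c ≠ Quotient.mk (annSetoid R) 1}

/-- The compressed zero-divisor graph `Γ_E(R)`. -/
def compressedZDG (R : Type*) [CommRing R] : SimpleGraph (CompressedVertex R) :=
  SimpleGraph.fromRel (fun c c' =>
    ∃ x y : R, Quotient.mk (annSetoid R) x = c.1 ∧ Quotient.mk (annSetoid R) y = c'.1 ∧ x * y = 0)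

/-- The graph of proper divisors of `N` (`1 < d < N`), `d ~ d'` iff `N ∣ d * d'`;
this is the compressed zero-divisor graph of `ℤ_N`. -/
def divisorGraph (N : ℕ) : SimpleGraph {d : ℕ // d ∣ N ∧ 1 < d ∧ d < N} :=
  SimpleGraph.fromRel (fun d e => N ∣ d.1 * e.1)

private lemma boxRep_index {V I : Type*} [Fintype I] {G : SimpleGraph V}
    (f : V → I → ℝ × ℝ) (h1 : ∀ v i, (f v i).1 ≤ (f v i).2)
    (h2 : ∀ u v : V, u ≠ v →
      (G.Adj u v ↔ ∀ i, max (f u i).1 (f v i).1 ≤ min (f u i).2 (f v i).2)) :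
    BoxRep G (Fintype.card I) := by
  refine ⟨fun v k => f v ((Fintype.equivFin I).symm k), fun v k => h1 _ _, fun u v huv => ?_⟩
  rw [h2 u v huv]
  exact ⟨fun h k => h _, fun h i => by simpa using h ((Fintype.equivFin I) i)⟩

private lemma boxRep_mono {V : Type*} {G : SimpleGraph V} {ℓ m : ℕ}
    (h : BoxRep G ℓ) (hlm : ℓ ≤ m) : BoxRep G m := by
  obtain ⟨f, h1, h2⟩ := h
  refine ⟨fun v k => if hk : (k : ℕ) < ℓ then f v ⟨k, hk⟩ else (0, 1), ?_, ?_⟩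
  · intro v k; dsimp only; split
    · exact h1 _ _
    · norm_num
  · intro u v huv
    rw [h2 u v huv]
    constructor
    · intro h k; dsimp only; split
      · exact h _
      · norm_num
    · intro h i
      have := h ⟨i, lt_of_lt_of_le i.2 hlm⟩
      simpa [i.2] using this

private lemma exists_boxRep {V : Type*} [Fintype V] (G : SimpleGraph V) :
    ∃ ℓ, 0 < ℓ ∧ BoxRep G ℓ := by
  classical
  refine ⟨Fintype.card (V × V) + 1, Nat.succ_pos _, boxRep_mono ?_ (Nat.le_succ _)⟩
  refine boxRep_index (f := fun w p =>
    if ¬ G.Adj p.1 p.2 ∧ p.1 ≠ p.2 then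
      (if w = p.1 then ((0:ℝ), (0:ℝ)) else if w = p.2 then (2, 2) else (0, 2))
    else (0, 2)) ?_ ?_
  · intro v i; split_ifs <;> norm_num
  · intro u v huv
    constructor
    · intro hadj p
      split_ifs with hp hu1 hv1 hv2 hu2 hv1' hv2' <;> try norm_num
      · exact absurd (hu1 ▸ hv2 ▸ hadj) hp.1
      · exact absurd (hv1' ▸ hu2 ▸ hadj.symm) hp.1
    · intro h
      by_contra hadj
      have := h (u, v)
      simp only [if_pos (⟨hadj, huv⟩ : ¬ G.Adj u v ∧ u ≠ v), if_pos rfl] at this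
      norm_num [Ne.symm huv] at this

private lemma boxRep_boxicity {V : Type*} [Fintype V] (G : SimpleGraph V) :
    0 < boxicity G ∧ BoxRep G (boxicity G) :=
  Nat.sInf_mem (exists_boxRep G)

private lemma boxicity_le {V : Type*} {G : SimpleGraph V} {ℓ : ℕ} (h0 : 0 < ℓ)
    (h : BoxRep G ℓ) : boxicity G ≤ ℓ := Nat.sInf_le ⟨h0, h⟩

private lemma genJoin_adj_same {n : ℕ} {V : Fin n → Type*} {G : SimpleGraph (Fin n)}
    {H : ∀ i, SimpleGraph (V i)} {i : Fin n} {x y : V i} :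
    (genJoin G H).Adj ⟨i, x⟩ ⟨i, y⟩ ↔ (H i).Adj x y := by
  simp only [genJoin, fromRel_adj, ne_eq, Sigma.mk.inj_iff, heq_eq_eq, true_and]
  constructor
  · rintro ⟨hne, (h | ⟨h, ha⟩) | (h | ⟨h, ha⟩)⟩
    · exact absurd h (G.irrefl)
    · exact ha
    · exact absurd h (G.irrefl)
    · exact ha.symm
  · intro h
    exact ⟨fun he => (H i).ne_of_adj h he, Or.inl (Or.inr ⟨trivial, h⟩)⟩

private lemma genJoin_adj_ne {n : ℕ} {V : Fin n → Type*} {G : SimpleGraph (Fin n)}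
    {H : ∀ i, SimpleGraph (V i)} {i j : Fin n} (hij : i ≠ j) {x : V i} {y : V j} :
    (genJoin G H).Adj ⟨i, x⟩ ⟨j, y⟩ ↔ G.Adj i j := by
  simp only [genJoin, fromRel_adj]
  constructor
  · rintro ⟨-, (h | ⟨h, -⟩) | (h | ⟨h, -⟩)⟩
    · exact h
    · exact absurd h hij
    · exact h.symm
    · exact absurd h.symm hij
  · intro h
    exact ⟨fun he => hij (congrArg Sigma.fst he), Or.inl (Or.inl h)⟩

/-- Lower and upper bounds for the boxicity of the generalized join: for every clique of `G`
all of whose associated graphs are non-complete, the sum of their boxicities is a lower bound,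
and the total sum of boxicities is an upper bound. -/
theorem boxicity_genJoin_bounds {n : ℕ} {V : Fin n → Type*} [∀ i, Fintype (V i)]
    (G : SimpleGraph (Fin n)) (H : ∀ i, SimpleGraph (V i))
    (hne : ∃ i, NotComplete (H i)) :
    (∀ s : Finset (Fin n), G.IsClique ↑s → (∀ i ∈ s, NotComplete (H i)) →
        ∑ i ∈ s, boxicity (H i) ≤ boxicity (genJoin G H)) ∧
    boxicity (genJoin G H) ≤ ∑ i, boxicity (H i) := by
  classical
  constructor
  · intro s hclique hsnc
    obtain ⟨hLpos, F, hF1, hF2⟩ := boxRep_boxicity (genJoin G H)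
    set C : Fin n → Finset (Fin (boxicity (genJoin G H))) := fun i =>
      Finset.univ.filter (fun c => ∃ x y : V i,
        min (F ⟨i, x⟩ c).2 (F ⟨i, y⟩ c).2 < max (F ⟨i, x⟩ c).1 (F ⟨i, y⟩ c).1) with hC
    have hmemC : ∀ (i : Fin n) (c : Fin (boxicity (genJoin G H))), c ∈ C i ↔ ∃ x y : V i,
        min (F ⟨i, x⟩ c).2 (F ⟨i, y⟩ c).2 < max (F ⟨i, x⟩ c).1 (F ⟨i, y⟩ c).1 := by
      intro i c; simp [hC]
    have hrep : ∀ i ∈ s, BoxRep (H i) ((C i).card) := by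
      intro i hi
      refine ⟨fun x k => F ⟨i, x⟩ ((C i).equivFin.symm k).1, fun x k => hF1 _ _, ?_⟩
      intro x y hxy
      have hsig : (⟨i, x⟩ : Σ i, V i) ≠ ⟨i, y⟩ := fun h => hxy (by simpa using h)
      rw [← genJoin_adj_same (G := G), hF2 _ _ hsig]
      constructor
      · intro h k; exact h _
      · intro h c
        by_cases hc : c ∈ C i
        · have := h ((C i).equivFin ⟨c, hc⟩)
          simpa using this
        · rw [hmemC] at hc
          push_neg at hc
          exact hc x y
    have hCne : ∀ i ∈ s, (C i).Nonempty := by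
      intro i hi
      obtain ⟨a, b, hab, hnadj⟩ := hsnc i hi
      have hsig : (⟨i, a⟩ : Σ i, V i) ≠ ⟨i, b⟩ := fun h => hab (by simpa using h)
      have hna : ¬ (genJoin G H).Adj ⟨i, a⟩ ⟨i, b⟩ := by rw [genJoin_adj_same]; exact hnadj
      rw [hF2 _ _ hsig] at hna
      push_neg at hna
      obtain ⟨c, hc⟩ := hna
      exact ⟨c, (hmemC i c).2 ⟨a, b, hc⟩⟩
    have hdisj : ∀ i ∈ s, ∀ j ∈ s, i ≠ j → Disjoint (C i) (C j) := by
      intro i hi j hj hij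
      rw [Finset.disjoint_left]
      intro c hci hcj
      obtain ⟨a, b, hab⟩ := (hmemC i c).1 hci
      obtain ⟨a', b', hab'⟩ := (hmemC j c).1 hcj
      have hGadj : G.Adj i j := hclique (Finset.mem_coe.2 hi) (Finset.mem_coe.2 hj) hij
      have cross : ∀ (x : V i) (y : V j),
          max (F ⟨i, x⟩ c).1 (F ⟨j, y⟩ c).1 ≤ min (F ⟨i, x⟩ c).2 (F ⟨j, y⟩ c).2 := by
        intro x y
        have hsig : (⟨i, x⟩ : Σ i, V i) ≠ ⟨j, y⟩ := fun h => hij (congrArg Sigma.fst h)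
        have hadj : (genJoin G H).Adj ⟨i, x⟩ ⟨j, y⟩ := (genJoin_adj_ne hij).2 hGadj
        exact (hF2 _ _ hsig).1 hadj c
      have c1 := cross a a'
      have c2 := cross a b'
      have c3 := cross b a'
      have c4 := cross b b'
      simp only [max_le_iff, le_min_iff] at c1 c2 c3 c4
      have d1 : (F ⟨i,a⟩ c).2 < (F ⟨i,b⟩ c).1 ∨ (F ⟨i,b⟩ c).2 < (F ⟨i,a⟩ c).1 := by
        rcases lt_max_iff.1 hab with h | h <;> rcases min_lt_iff.1 h with h' | h'
        · exact absurd h' (not_lt.2 (hF1 _ _))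
        · exact Or.inr h'
        · exact Or.inl h'
        · exact absurd h' (not_lt.2 (hF1 _ _))
      have d2 : (F ⟨j,a'⟩ c).2 < (F ⟨j,b'⟩ c).1 ∨ (F ⟨j,b'⟩ c).2 < (F ⟨j,a'⟩ c).1 := by
        rcases lt_max_iff.1 hab' with h | h <;> rcases min_lt_iff.1 h with h' | h'
        · exact absurd h' (not_lt.2 (hF1 _ _))
        · exact Or.inr h'
        · exact Or.inl h'
        · exact absurd h' (not_lt.2 (hF1 _ _))
      rcases d1 with h1 | h1 <;> rcases d2 with h2 | h2 <;>
        linarith [c1.1.1, c1.1.2, c1.2.1, c1.2.2, c2.1.1, c2.1.2, c2.2.1, c2.2.2,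
          c3.1.1, c3.1.2, c3.2.1, c3.2.2, c4.1.1, c4.1.2, c4.2.1, c4.2.2]
    calc ∑ i ∈ s, boxicity (H i) ≤ ∑ i ∈ s, (C i).card := by
          refine Finset.sum_le_sum fun i hi => boxicity_le ?_ (hrep i hi)
          exact Finset.card_pos.2 (hCne i hi)
      _ = (s.biUnion C).card := (Finset.card_biUnion hdisj).symm
      _ ≤ Fintype.card (Fin (boxicity (genJoin G H))) := Finset.card_le_univ _
      _ = boxicity (genJoin G H) := Fintype.card_fin _
  · -- upper bound
    have hpos := fun i => (boxRep_boxicity (H i)).1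
    choose f hf1 hf2 using fun i => (boxRep_boxicity (H i)).2
    obtain ⟨B0, hB0⟩ := Finite.exists_le
      (fun p : Σ i : Fin n, V i × Fin (boxicity (H i)) =>
        max |(f p.1 p.2.1 p.2.2).1| |(f p.1 p.2.1 p.2.2).2|)
    set B : ℝ := max B0 0 with hBdef
    have hB : 0 ≤ B := le_max_right _ _
    have hlo : ∀ (i : Fin n) (x : V i) (c : Fin (boxicity (H i))), -B ≤ (f i x c).1 := by
      intro i x c
      have := hB0 ⟨i, x, c⟩
      have h1 : |(f i x c).1| ≤ B := le_trans (le_trans (le_max_left _ _) this) (le_max_left _ _)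
      linarith [abs_le.mp h1]
    have hhi : ∀ (i : Fin n) (x : V i) (c : Fin (boxicity (H i))), (f i x c).2 ≤ B := by
      intro i x c
      have := hB0 ⟨i, x, c⟩
      have h1 : |(f i x c).2| ≤ B := le_trans (le_trans (le_max_right _ _) this) (le_max_left _ _)
      linarith [abs_le.mp h1]
    have hfl : ∀ (i : Fin n) (x : V i) (c : Fin (boxicity (H i))), (f i x c).1 ≤ (f i x c).2 :=
      fun i x c => hf1 i x c
    set F : (Σ i, V i) → (Σ i : Fin n, Fin (boxicity (H i))) → ℝ × ℝ :=
      fun x p => if h : p.1 = x.1 then f x.1 x.2 (h ▸ p.2)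
        else if G.Adj x.1 p.1 then (-B, B + 1) else (B + 1, B + 1) with hFdef
    have hFi : ∀ (i : Fin n) (x : V i) (c : Fin (boxicity (H i))),
        F ⟨i, x⟩ ⟨i, c⟩ = f i x c := fun i x c => dif_pos rfl
    have hFne : ∀ (i : Fin n) (x : V i) (k : Fin n) (c : Fin (boxicity (H k))), k ≠ i →
        F ⟨i, x⟩ ⟨k, c⟩ = if G.Adj i k then (-B, B + 1) else (B + 1, B + 1) :=
      fun i x k c h => dif_neg h
    have hrep : BoxRep (genJoin G H) (Fintype.card (Σ i : Fin n, Fin (boxicity (H i)))) := by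
      refine boxRep_index F ?_ ?_
      · rintro ⟨i, x⟩ ⟨k, c⟩
        by_cases hk : k = i
        · subst hk; rw [hFi]; exact hf1 _ _ _
        · rw [hFne _ _ _ _ hk]; split_ifs <;> dsimp only <;> linarith
      · rintro ⟨i, x⟩ ⟨j, y⟩ huv
        by_cases hij : i = j
        · subst hij
          have hxy : x ≠ y := fun h => huv (by rw [h])
          rw [genJoin_adj_same, hf2 i x y hxy]
          constructor
          · rintro h ⟨k, c⟩
            by_cases hk : k = i
            · subst hk; rw [hFi, hFi]; exact h c
            · rw [hFne _ _ _ _ hk, hFne _ _ _ _ hk]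
              split_ifs <;> dsimp only <;> simp only [max_le_iff, le_min_iff] <;>
                refine ⟨⟨?_, ?_⟩, ?_, ?_⟩ <;> linarith
          · intro h c
            have := h ⟨i, c⟩
            rwa [hFi, hFi] at this
        · rw [genJoin_adj_ne hij]
          constructor
          · rintro hadj ⟨k, c⟩
            by_cases hki : k = i
            · subst hki
              rw [hFi, hFne _ _ _ _ hij, if_pos hadj.symm]
              dsimp only
              simp only [max_le_iff, le_min_iff]
              refine ⟨⟨?_, ?_⟩, ?_, ?_⟩ <;> linarith [hfl _ x c, hlo _ x c, hhi _ x c]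
            · by_cases hkj : k = j
              · subst hkj
                rw [hFne _ _ _ _ hki, if_pos hadj, hFi]
                dsimp only
                simp only [max_le_iff, le_min_iff]
                refine ⟨⟨?_, ?_⟩, ?_, ?_⟩ <;> linarith [hfl _ y c, hlo _ y c, hhi _ y c]
              · rw [hFne _ _ _ _ hki, hFne _ _ _ _ hkj]
                split_ifs <;> dsimp only <;> simp only [max_le_iff, le_min_iff] <;>
                  refine ⟨⟨?_, ?_⟩, ?_, ?_⟩ <;> linarith
          · intro h
            by_contra hadj
            have hji : ¬ G.Adj j i := fun ha => hadj ha.symm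
            have hc := h ⟨i, ⟨0, hpos i⟩⟩
            rw [hFi, hFne _ _ _ _ hij, if_neg hji] at hc
            dsimp only at hc
            simp only [max_le_iff, le_min_iff] at hc
            linarith [hhi i x ⟨0, hpos i⟩, hc.1.2]
    have hcard : Fintype.card (Σ i : Fin n, Fin (boxicity (H i))) = ∑ i, boxicity (H i) := by
      simp [Fintype.card_sigma]
    rw [hcard] at hrep
    refine boxicity_le ?_ hrep
    obtain ⟨i0, -⟩ := hne
    exact Finset.sum_pos (fun i _ => hpos i) ⟨i0, mem_univ i0⟩
end

section
/- Let G be a graph on vertices u₁,…,u_n such that {u₁,…,u_ℓ} induces a clique in G with ℓ < n. If H₁,…,H_ℓ are pairwise disjoint complete graphs and H_{ℓ+1},…,H_n are arbitrary pairwise disjoint graphs, then box(G[H₁,…,H_n]) ≤ box(H_{ℓ+1}) + … + box(H_n). -/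
open SimpleGraph Finset

/-!
Give each of `H_{ℓ+1}, …, Hₙ` its own block of coordinates, and in the block of `Hᵢ` squash
an optimal box representation of `Hᵢ` into `(-π/2, π/2)` by `arctan`. Every vertex outside `Hᵢ`
gets, in that block, the interval `[-π/2, π/2]` if its part is adjacent to `uᵢ` in `G`, and the
point `π/2` otherwise. The block of `Hᵢ` then separates exactly the non-adjacent pairs inside
`Hᵢ` and the pairs between `Hᵢ` and the parts not adjacent to `uᵢ`. The only non-adjacent pairs
it cannot see lie in parts `u_j, u_k` with `j, k ≤ ℓ`; these are excluded because
`{u₁, …, u_ℓ}` is a clique and `H₁, …, H_ℓ` are complete.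
-/

open Real

def IntervalsMeet (p q : ℝ × ℝ) : Prop :=
  max p.1 q.1 ≤ min p.2 q.2

lemma intervalsMeet_comm {p q : ℝ × ℝ} : IntervalsMeet p q ↔ IntervalsMeet q p := by
  rw [IntervalsMeet, IntervalsMeet, max_comm, min_comm]

lemma StrictMono.intervalsMeet_map_iff {φ : ℝ → ℝ} (hφ : StrictMono φ) {p q : ℝ × ℝ} :
    IntervalsMeet (Prod.map φ φ p) (Prod.map φ φ q) ↔ IntervalsMeet p q := by
  simp only [IntervalsMeet, Prod.map_fst, Prod.map_snd, ← hφ.monotone.map_max,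
    ← hφ.monotone.map_min, hφ.le_iff_le]

def BoxRepOn {V : Type*} (G : SimpleGraph V) (I : Type*) : Prop :=
  ∃ f : V → I → ℝ × ℝ, (∀ v i, (f v i).1 ≤ (f v i).2) ∧
    ∀ u v : V, u ≠ v → (G.Adj u v ↔ ∀ i, IntervalsMeet (f u i) (f v i))

section BoxRepOn

variable {V I : Type*} {G : SimpleGraph V}

lemma BoxRepOn.boxRep {m : ℕ} (h : BoxRepOn G I) (e : I ≃ Fin m) : BoxRep G m := by
  obtain ⟨f, hf_le, hf_adj⟩ := h
  refine ⟨fun v i => f v (e.symm i), fun v i => hf_le v _, fun u v huv => ?_⟩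
  rw [hf_adj u v huv, e.symm.forall_congr_left]
  simp [IntervalsMeet]

lemma boxRepOn_top (V I : Type*) : BoxRepOn (⊤ : SimpleGraph V) I :=
  ⟨fun _ _ => (0, 0), fun _ _ => le_rfl, fun u v huv => by simp [IntervalsMeet, huv]⟩

open Classical in
/-- Coordinate `w` puts `w` at `1`, its neighbours on `[0, 1]` and everything else at `0`;
the extra coordinate `none` only makes the dimension positive. -/
noncomputable def neighbourBox (G : SimpleGraph V) (v : V) : Option V → ℝ × ℝ
  | none => (0, 0)
  | some w => (if w = v then 1 else 0, if w = v ∨ G.Adj v w then 1 else 0)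

lemma boxRepOn_option (G : SimpleGraph V) : BoxRepOn G (Option V) := by
  refine ⟨neighbourBox G, ?_, fun u v huv => ⟨fun hadj c => ?_, fun h => ?_⟩⟩
  · rintro v (_ | w) <;> simp only [neighbourBox, le_refl]
    split_ifs <;> simp_all
  · rcases c with _ | w
    · simp [neighbourBox, IntervalsMeet]
    · by_cases hwu : w = u <;> by_cases hwv : w = v <;> subst_vars <;>
        simp only [neighbourBox, IntervalsMeet] <;> split_ifs <;> simp_all [hadj.symm]
  · by_contra hadj
    have hu := h (some u)
    norm_num [neighbourBox, IntervalsMeet, huv, hadj, adj_comm] at hu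

lemma boxicity_pos_and_boxRep [Fintype V] (G : SimpleGraph V) :
    0 < boxicity G ∧ BoxRep G (boxicity G) :=
  Nat.sInf_mem (s := {ℓ | 0 < ℓ ∧ BoxRep G ℓ})
    ⟨Fintype.card (Option V), Fintype.card_pos, (boxRepOn_option G).boxRep (Fintype.equivFin _)⟩

end BoxRepOn

section genJoin

variable {n : ℕ} {V : Fin n → Type*} (G : SimpleGraph (Fin n)) (H : ∀ i, SimpleGraph (V i))

lemma genJoin_adj_mk_mk_of_ne {j k : Fin n} (v : V j) (w : V k) (hjk : j ≠ k) :
    (genJoin G H).Adj ⟨j, v⟩ ⟨k, w⟩ ↔ G.Adj j k := by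
  simp only [genJoin, fromRel_adj]
  constructor
  · rintro ⟨-, (h | ⟨h, -⟩) | (h | ⟨h, -⟩)⟩
    exacts [h, absurd h hjk, h.symm, absurd h.symm hjk]
  · exact fun h => ⟨fun he => hjk (congrArg Sigma.fst he), Or.inl (Or.inl h)⟩

lemma genJoin_adj_mk_mk_self {j : Fin n} (v w : V j) :
    (genJoin G H).Adj ⟨j, v⟩ ⟨j, w⟩ ↔ (H j).Adj v w := by
  simp only [genJoin, fromRel_adj]
  constructor
  · rintro ⟨-, (h | ⟨-, ha⟩) | (h | ⟨-, ha⟩)⟩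
    exacts [absurd h G.irrefl, ha, absurd h G.irrefl, ha.symm]
  · exact fun h =>
      ⟨fun he => h.ne (eq_of_heq (Sigma.mk.inj_iff.mp he).2), Or.inl (Or.inr ⟨trivial, h⟩)⟩

end genJoin

section joinBox

variable {n : ℕ} {V I : Fin n → Type*} (G : SimpleGraph (Fin n)) (f : ∀ i, V i → I i → ℝ × ℝ)

open Classical in
noncomputable def joinBox (x : Σ j, V j) (c : Σ i, I i) : ℝ × ℝ :=
  if h : x.1 = c.1 then Prod.map arctan arctan (f c.1 (h ▸ x.2) c.2)
  else if G.Adj x.1 c.1 then (-(π / 2), π / 2) else (π / 2, π / 2)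

variable {G f}

lemma joinBox_self {i : Fin n} (v : V i) (t : I i) :
    joinBox G f ⟨i, v⟩ ⟨i, t⟩ = Prod.map arctan arctan (f i v t) :=
  dif_pos rfl

lemma joinBox_fst_le_snd (hf : ∀ i v t, (f i v t).1 ≤ (f i v t).2) (x : Σ j, V j)
    (c : Σ i, I i) : (joinBox G f x c).1 ≤ (joinBox G f x c).2 := by
  obtain ⟨j, v⟩ := x
  obtain ⟨i, t⟩ := c
  rcases eq_or_ne j i with rfl | hji
  · rw [joinBox_self]
    exact arctan_strictMono.monotone (hf j v t)
  · simp only [joinBox, dif_neg hji]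
    split_ifs <;> linarith [pi_pos]

lemma intervalsMeet_joinBox_self {i : Fin n} (v w : V i) (t : I i) :
    IntervalsMeet (joinBox G f ⟨i, v⟩ ⟨i, t⟩) (joinBox G f ⟨i, w⟩ ⟨i, t⟩) ↔
      IntervalsMeet (f i v t) (f i w t) := by
  rw [joinBox_self, joinBox_self, arctan_strictMono.intervalsMeet_map_iff]

lemma intervalsMeet_joinBox_of_ne {i j k : Fin n} (v : V j) (w : V k) (t : I i)
    (hji : j ≠ i) (hki : k ≠ i) :
    IntervalsMeet (joinBox G f ⟨j, v⟩ ⟨i, t⟩) (joinBox G f ⟨k, w⟩ ⟨i, t⟩) := by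
  simp only [IntervalsMeet, joinBox, dif_neg hji, dif_neg hki]
  split_ifs <;> simp <;> positivity

lemma intervalsMeet_joinBox_self_left_iff (hf : ∀ i v t, (f i v t).1 ≤ (f i v t).2)
    {i k : Fin n} (v : V i) (w : V k) (t : I i) (hki : k ≠ i) :
    IntervalsMeet (joinBox G f ⟨i, v⟩ ⟨i, t⟩) (joinBox G f ⟨k, w⟩ ⟨i, t⟩) ↔ G.Adj k i := by
  have hv := arctan_strictMono.monotone (hf i v t)
  have := arctan_lt_pi_div_two (f i v t).2
  have := neg_pi_div_two_lt_arctan (f i v t).1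
  rw [joinBox_self]
  simp only [IntervalsMeet, joinBox, dif_neg hki]
  split_ifs with hadj <;> simp only [hadj, Prod.map_fst, Prod.map_snd, max_le_iff, le_min_iff,
    iff_true, iff_false]
  · exact ⟨⟨hv, by linarith⟩, by linarith, by linarith⟩
  · exact fun h => by linarith [h.1.2]

end joinBox

theorem boxRepOn_genJoin {n : ℕ} {V I : Fin n → Type*} (G : SimpleGraph (Fin n))
    (H : ∀ i, SimpleGraph (V i)) (hrep : ∀ i, BoxRepOn (H i) (I i))
    (hsep : ∀ j k, j ≠ k → ¬ G.Adj j k → Nonempty (I j) ∨ Nonempty (I k)) :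
    BoxRepOn (genJoin G H) (Σ i, I i) := by
  choose f hf_le hf_adj using hrep
  refine ⟨joinBox G f, joinBox_fst_le_snd hf_le, ?_⟩
  rintro ⟨j, v⟩ ⟨k, w⟩ hne
  rcases eq_or_ne j k with rfl | hjk
  · have hvw : v ≠ w := fun h => hne (h ▸ rfl)
    rw [genJoin_adj_mk_mk_self, hf_adj j v w hvw]
    refine ⟨fun h ⟨i, t⟩ => ?_, fun h t => (intervalsMeet_joinBox_self v w t).1 (h ⟨j, t⟩)⟩
    rcases eq_or_ne j i with rfl | hji
    · exact (intervalsMeet_joinBox_self v w t).2 (h t)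
    · exact intervalsMeet_joinBox_of_ne v w t hji hji
  · have meet_left (t : I j) := intervalsMeet_joinBox_self_left_iff (G := G) hf_le v w t hjk.symm
    have meet_right (t : I k) :=
      intervalsMeet_comm.trans (intervalsMeet_joinBox_self_left_iff (G := G) hf_le w v t hjk)
    rw [genJoin_adj_mk_mk_of_ne G H v w hjk]
    refine ⟨fun hadj ⟨i, t⟩ => ?_, fun h => ?_⟩
    · rcases eq_or_ne j i with rfl | hji
      · exact (meet_left t).2 hadj.symm
      rcases eq_or_ne k i with rfl | hki
      · exact (meet_right t).2 hadj
      exact intervalsMeet_joinBox_of_ne v w t hji hki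
    · by_contra hadj
      rcases hsep j k hjk hadj with ⟨⟨t⟩⟩ | ⟨⟨t⟩⟩
      · exact hadj ((meet_left t).1 (h ⟨j, t⟩)).symm
      · exact hadj ((meet_right t).1 (h ⟨k, t⟩))

/-- If `{u₁, …, u_ℓ}` induces a clique in `G` with `ℓ < n` and `H₁, …, H_ℓ` are complete,
then `box(G[H₁, …, Hₙ]) ≤ box(H_{ℓ+1}) + ⋯ + box(Hₙ)`. -/
theorem boxicity_genJoin_le_sum_of_clique_complete {n : ℕ} {V : Fin n → Type*}
    [∀ i, Fintype (V i)] (G : SimpleGraph (Fin n)) (H : ∀ i, SimpleGraph (V i))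
    (ℓ : ℕ) (hℓ : ℓ < n)
    (hclique : G.IsClique {i : Fin n | (i : ℕ) < ℓ})
    (hcomplete : ∀ i : Fin n, (i : ℕ) < ℓ → H i = ⊤) :
    boxicity (genJoin G H) ≤
      ∑ i ∈ Finset.univ.filter (fun i : Fin n => ℓ ≤ (i : ℕ)), boxicity (H i) := by
  classical
  set d : Fin n → ℕ := fun i => if ℓ ≤ (i : ℕ) then boxicity (H i) else 0
  have hd_pos (i : Fin n) (hi : ℓ ≤ (i : ℕ)) : 0 < d i := by
    simpa [d, hi] using (boxicity_pos_and_boxRep (H i)).1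
  have hrep (i : Fin n) : BoxRepOn (H i) (Fin (d i)) := by
    by_cases hi : ℓ ≤ (i : ℕ)
    · simp only [d, if_pos hi]
      exact (boxicity_pos_and_boxRep (H i)).2
    · rw [hcomplete i (by omega)]
      exact boxRepOn_top _ _
  have hsep (j k : Fin n) (hjk : j ≠ k) (hadj : ¬ G.Adj j k) :
      Nonempty (Fin (d j)) ∨ Nonempty (Fin (d k)) := by
    by_cases hj : ℓ ≤ (j : ℕ)
    · exact .inl ⟨⟨0, hd_pos j hj⟩⟩
    by_cases hk : ℓ ≤ (k : ℕ)
    · exact .inr ⟨⟨0, hd_pos k hk⟩⟩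
    exact absurd (hclique (show (j : ℕ) < ℓ by omega) (show (k : ℕ) < ℓ by omega) hjk) hadj
  have hrep_join : BoxRep (genJoin G H) (∑ i, d i) :=
    (boxRepOn_genJoin G H hrep hsep).boxRep finSigmaFinEquiv
  have hsum_pos : 0 < ∑ i, d i :=
    (hd_pos ⟨ℓ, hℓ⟩ le_rfl).trans_le (Finset.single_le_sum (by simp) (Finset.mem_univ _))
  calc boxicity (genJoin G H) ≤ ∑ i, d i := Nat.sInf_le ⟨hsum_pos, hrep_join⟩
    _ = _ := (Finset.sum_filter _ _).symm
end
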